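/- Let $A$ be a bounded normal operator on a complex Hilbert space $X$ with spectral measure $E_A$. Then $\mathcal{E}^{\{0\}}(A) = \bigcup_{\alpha>0} E_A(\Delta_\alpha) X$, where $\Delta_\alpha := \{\lambda\in\mathbb{C} : |\lambda|\le\alpha\}$. -/

import Mathlib

/-!
The spectral measure turns `‖Aⁿ f‖²` into the `2n`-th moment of `‖z‖` under the measure `μ f`,
and `f` lies in `E(Δ_α) X` exactly when `μ f` is carried by the disk `Δ_α`. On that disk the
moments are at most `α²ⁿ ‖f‖²`. Conversely, if `‖Aⁿ f‖ ≤ c αⁿ`, Chebyshev's inequality gives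
`μ f {β ≤ ‖z‖} ≤ c² (α / β)²ⁿ → 0` for every `β > α`, so `μ f` is carried by `Δ_α`.
-/

open MeasureTheory

variable {X : Type*} [NormedAddCommGroup X] [InnerProductSpace ℂ X] [CompleteSpace X]

/-- `E` is the projection-valued spectral measure of the bounded (normal) operator `A`
on the complex Hilbert space `X`, and `μ f` is the associated positive Borel measure
`μ f (s) = ⟨E(s) f, f⟩ = ‖E(s) f‖²`. -/
structure IsSpectralMeasureOf (A : X →L[ℂ] X) (E : Set ℂ → X →L[ℂ] X)
    (μ : X → Measure ℂ) : Prop where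
  empty : E ∅ = 0
  univ : E Set.univ = ContinuousLinearMap.id ℂ X
  inter : ∀ s t : Set ℂ, MeasurableSet s → MeasurableSet t →
    E (s ∩ t) = (E s).comp (E t)
  symm : ∀ s : Set ℂ, MeasurableSet s → ∀ f g : X,
    (inner ℂ (E s f) g : ℂ) = inner ℂ f (E s g)
  countably_additive : ∀ s : ℕ → Set ℂ, (∀ n, MeasurableSet (s n)) →
    Pairwise (Function.onFun Disjoint s) → ∀ f : X,
      HasSum (fun n => E (s n) f) (E (⋃ n, s n) f)
  mu_def : ∀ (f : X) (s : Set ℂ), MeasurableSet s →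
    μ f s = ENNReal.ofReal (‖E s f‖ ^ 2)
  mu_univ : ∀ f : X, μ f Set.univ = ENNReal.ofReal (‖f‖ ^ 2)
  inner_A_eq : ∀ f : X, (inner ℂ (A f) f : ℂ) = ∫ z : ℂ, z ∂(μ f)
  norm_pow_eq : ∀ (f : X) (n : ℕ),
    ENNReal.ofReal (‖(A ^ n) f‖ ^ 2) =
      ∫⁻ z : ℂ, ENNReal.ofReal (‖z‖ ^ (2 * n)) ∂(μ f)

theorem measure_setOf_le_eq_zero_of_lintegral_pow_le {Ω : Type*} [MeasurableSpace Ω]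
    {ν : Measure Ω} {g : Ω → ℝ} (hg : AEMeasurable g ν) {a b C : ℝ} (ha : 0 ≤ a) (hab : a < b)
    (h : ∀ n : ℕ, ∫⁻ ω, ENNReal.ofReal (g ω ^ n) ∂ν ≤ ENNReal.ofReal (C * a ^ n)) :
    ν {ω | b ≤ g ω} = 0 := by
  have hb : 0 < b := ha.trans_lt hab
  have hmarkov : ∀ n : ℕ, ν {ω | b ≤ g ω} ≤ ENNReal.ofReal (C * (a / b) ^ n) := by
    intro n
    have hsub : {ω | b ≤ g ω} ⊆
        {ω | ENNReal.ofReal (b ^ n) ≤ ENNReal.ofReal (g ω ^ n)} := fun ω hω =>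
      ENNReal.ofReal_le_ofReal (pow_le_pow_left₀ hb.le hω n)
    have hmul : ENNReal.ofReal (b ^ n) * ν {ω | b ≤ g ω} ≤ ENNReal.ofReal (C * a ^ n) :=
      calc ENNReal.ofReal (b ^ n) * ν {ω | b ≤ g ω}
          ≤ ENNReal.ofReal (b ^ n) *
              ν {ω | ENNReal.ofReal (b ^ n) ≤ ENNReal.ofReal (g ω ^ n)} := by
            gcongr
        _ ≤ ∫⁻ ω, ENNReal.ofReal (g ω ^ n) ∂ν :=
            mul_meas_ge_le_lintegral₀ (hg.pow_const n).ennreal_ofReal _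
        _ ≤ _ := h n
    have hbn : ENNReal.ofReal (b ^ n) ≠ 0 := by simp [pow_pos hb n]
    rw [mul_comm, ← ENNReal.le_div_iff_mul_le (Or.inl hbn) (Or.inl ENNReal.ofReal_ne_top),
      ← ENNReal.ofReal_div_of_pos (pow_pos hb n), mul_div_assoc, ← div_pow] at hmul
    exact hmul
  have htend : Filter.Tendsto (fun n : ℕ => ENNReal.ofReal (C * (a / b) ^ n)) Filter.atTop
      (nhds 0) := by
    rw [← ENNReal.ofReal_zero, ← mul_zero C]
    exact ENNReal.tendsto_ofReal ((tendsto_pow_atTop_nhds_zero_of_lt_one (by positivity)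
      ((div_lt_one hb).2 hab)).const_mul C)
  exact le_zero_iff.1 (ge_of_tendsto' htend hmarkov)

theorem ae_le_of_lintegral_pow_le {Ω : Type*} [MeasurableSpace Ω] {ν : Measure Ω} {g : Ω → ℝ}
    (hg : AEMeasurable g ν) {a C : ℝ} (ha : 0 ≤ a)
    (h : ∀ n : ℕ, ∫⁻ ω, ENNReal.ofReal (g ω ^ n) ∂ν ≤ ENNReal.ofReal (C * a ^ n)) :
    ∀ᵐ ω ∂ν, g ω ≤ a := by
  have hlt : ∀ k : ℕ, ∀ᵐ ω ∂ν, g ω < a + 1 / (k + 1) := fun k => by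
    simpa only [ae_iff, not_lt] using measure_setOf_le_eq_zero_of_lintegral_pow_le hg ha
      (lt_add_of_pos_right a Nat.one_div_pos_of_nat) h
  filter_upwards [ae_all_iff.2 hlt] with ω hω
  have htend := tendsto_one_div_add_atTop_nhds_zero_nat.const_add a
  rw [add_zero] at htend
  exact ge_of_tendsto' htend fun k => (hω k).le

namespace IsSpectralMeasureOf

variable {H : Type*} [NormedAddCommGroup H] [InnerProductSpace ℂ H]
  {A : H →L[ℂ] H} {E : Set ℂ → H →L[ℂ] H} {μ : H → Measure ℂ}

theorem apply_union (hE : IsSpectralMeasureOf A E μ) {s t : Set ℂ} (hs : MeasurableSet s)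
    (ht : MeasurableSet t) (hst : Disjoint s t) (f : H) :
    E (s ∪ t) f = E s f + E t f := by
  set u : ℕ → Set ℂ := fun n => if n = 0 then s else if n = 1 then t else ∅ with hu
  have hum : ∀ n, MeasurableSet (u n) := by
    intro n
    rcases n with _ | _ | n <;> simp [hu, hs, ht]
  have hud : Pairwise (Function.onFun Disjoint u) := by
    refine (pairwise_disjoint_on u).2 fun m n hmn => ?_
    rcases m with _ | _ | m <;> rcases n with _ | _ | n <;> simp_all
  have hunion : (⋃ n, u n) = s ∪ t := by
    ext z
    simp only [Set.mem_iUnion, Set.mem_union, hu]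
    constructor
    · rintro ⟨_ | _ | n, hn⟩ <;> simp_all
    · rintro (hz | hz)
      exacts [⟨0, by simpa⟩, ⟨1, by simpa⟩]
  have hsum := hE.countably_additive u hum hud f
  rw [hunion] at hsum
  have hzero : ∀ n ∉ Finset.range 2, E (u n) f = 0 := fun n hn => by
    simp only [Finset.mem_range, not_lt] at hn
    simp [hu, show n ≠ 0 by omega, show n ≠ 1 by omega, hE.empty]
  have hfin := hasSum_sum_of_ne_finset_zero (L := .unconditional ℕ) (f := fun n => E (u n) f) hzero
  simp only [Finset.sum_range_succ, Finset.sum_range_zero, zero_add, hu] at hfin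
  exact hsum.unique hfin

theorem mem_range_iff_apply_compl_eq_zero (hE : IsSpectralMeasureOf A E μ) {s : Set ℂ}
    (hs : MeasurableSet s) {f : H} : f ∈ Set.range (E s) ↔ E sᶜ f = 0 := by
  constructor
  · rintro ⟨g, rfl⟩
    rw [← ContinuousLinearMap.comp_apply, ← hE.inter _ _ hs.compl hs, Set.compl_inter_self,
      hE.empty, zero_apply]
  · intro h
    refine ⟨f, ?_⟩
    have := hE.apply_union hs hs.compl disjoint_compl_right f
    rwa [Set.union_compl_self, hE.univ, h, add_zero, eq_comm] at this

theorem measure_eq_zero_iff (hE : IsSpectralMeasureOf A E μ) {s : Set ℂ} (hs : MeasurableSet s)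
    {f : H} : μ f s = 0 ↔ E s f = 0 := by
  rw [hE.mu_def f s hs, ENNReal.ofReal_eq_zero]
  simp

theorem mem_range_iff_ae_mem (hE : IsSpectralMeasureOf A E μ) {s : Set ℂ}
    (hs : MeasurableSet s) {f : H} : f ∈ Set.range (E s) ↔ ∀ᵐ z ∂μ f, z ∈ s := by
  rw [hE.mem_range_iff_apply_compl_eq_zero hs, ← hE.measure_eq_zero_iff hs.compl, ae_iff]
  rfl

theorem norm_pow_apply_le_of_ae_norm_le (hE : IsSpectralMeasureOf A E μ) {f : H} {α : ℝ}
    (hα : 0 ≤ α) (h : ∀ᵐ z ∂μ f, ‖z‖ ≤ α) (n : ℕ) : ‖(A ^ n) f‖ ≤ α ^ n * ‖f‖ := by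
  have hsq : ENNReal.ofReal (‖(A ^ n) f‖ ^ 2) ≤ ENNReal.ofReal ((α ^ n * ‖f‖) ^ 2) :=
    calc ENNReal.ofReal (‖(A ^ n) f‖ ^ 2)
        = ∫⁻ z, ENNReal.ofReal (‖z‖ ^ (2 * n)) ∂μ f := hE.norm_pow_eq f n
      _ ≤ ∫⁻ _, ENNReal.ofReal (α ^ (2 * n)) ∂μ f := lintegral_mono_ae <| h.mono fun z hz =>
          ENNReal.ofReal_le_ofReal (pow_le_pow_left₀ (norm_nonneg z) hz _)
      _ = ENNReal.ofReal (α ^ (2 * n)) * μ f Set.univ := lintegral_const _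
      _ = ENNReal.ofReal ((α ^ n * ‖f‖) ^ 2) := by
          rw [hE.mu_univ, ← ENNReal.ofReal_mul (by positivity)]
          ring_nf
  rw [ENNReal.ofReal_le_ofReal_iff (by positivity)] at hsq
  exact (pow_le_pow_iff_left₀ (norm_nonneg _) (by positivity) two_ne_zero).1 hsq

theorem ae_norm_le_of_norm_pow_apply_le (hE : IsSpectralMeasureOf A E μ) {f : H} {α c : ℝ}
    (hα : 0 ≤ α) (h : ∀ n : ℕ, ‖(A ^ n) f‖ ≤ c * α ^ n) : ∀ᵐ z ∂μ f, ‖z‖ ≤ α := by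
  have hmoment : ∀ n : ℕ, ∫⁻ z, ENNReal.ofReal ((‖z‖ ^ 2) ^ n) ∂μ f ≤
      ENNReal.ofReal (c ^ 2 * (α ^ 2) ^ n) := fun n => by
    simp_rw [← pow_mul]
    rw [← hE.norm_pow_eq f n, mul_comm 2 n, pow_mul, ← mul_pow]
    exact ENNReal.ofReal_le_ofReal (pow_le_pow_left₀ (norm_nonneg _) (h n) 2)
  filter_upwards [ae_le_of_lintegral_pow_le (by fun_prop) (sq_nonneg α) hmoment] with z hz
  exact (pow_le_pow_iff_left₀ (norm_nonneg z) hα two_ne_zero).1 hz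

end IsSpectralMeasureOf

theorem exp_type_eq_union_ranges_general (A : X →L[ℂ] X)
    (E : Set ℂ → X →L[ℂ] X) (μ : X → Measure ℂ) (hE : IsSpectralMeasureOf A E μ) :
    {f : X | ∃ α : ℝ, 0 < α ∧ ∃ c : ℝ, 0 < c ∧ ∀ n : ℕ, ‖(A ^ n) f‖ ≤ c * α ^ n} =
      ⋃ α : ℝ, ⋃ _ : 0 < α, Set.range (E {z : ℂ | ‖z‖ ≤ α}) := by
  have hdisk : ∀ α : ℝ, MeasurableSet {z : ℂ | ‖z‖ ≤ α} := fun α =>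
    measurableSet_le measurable_norm measurable_const
  ext f
  simp only [Set.mem_ofPred_eq, Set.mem_iUnion, hE.mem_range_iff_ae_mem (hdisk _)]
  constructor
  · rintro ⟨α, hα, c, -, hbound⟩
    exact ⟨α, hα, hE.ae_norm_le_of_norm_pow_apply_le hα.le hbound⟩
  · rintro ⟨α, hα, hf⟩
    refine ⟨α, hα, ‖f‖ + 1, by positivity, fun n => ?_⟩
    calc ‖(A ^ n) f‖ ≤ α ^ n * ‖f‖ := hE.norm_pow_apply_le_of_ae_norm_le hα.le hf n
      _ ≤ (‖f‖ + 1) * α ^ n := by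
          rw [mul_comm]
          gcongr
          linarith

/-- `𝓔^{0}(A) = ⋃_{α>0} E_A(Δ_α) X`, where `Δ_α = {λ : |λ| ≤ α}`:
the entire vectors of exponential type are exactly the vectors in the ranges of the
spectral projections onto closed disks. -/
theorem exp_type_eq_union_ranges (A : X →L[ℂ] X) (hA : IsStarNormal A)
    (E : Set ℂ → X →L[ℂ] X) (μ : X → Measure ℂ) (hE : IsSpectralMeasureOf A E μ) :
    {f : X | ∃ α : ℝ, 0 < α ∧ ∃ c : ℝ, 0 < c ∧ ∀ n : ℕ, ‖(A ^ n) f‖ ≤ c * α ^ n} =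
      ⋃ α : ℝ, ⋃ _ : 0 < α, Set.range (E {z : ℂ | ‖z‖ ≤ α}) :=
  exp_type_eq_union_ranges_general A E μ hE
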